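/- arXiv:2201.08021 — 4 statements merged into one kernel-verified Lean document; each statement's English description precedes it below -/
import Mathlib

section
/- Let f ≥ 1 be an integer, q = 2^f, let K be a finite field with |K| = q, and let n ≥ 4 be an even integer. Let J ∈ GLₙ(K) be the block matrix [[I_{n/2}, 0], [I_{n/2}, I_{n/2}]] (lower-triangular with identity diagonal blocks and identity lower-left block). Then the number of involutions A ∈ GLₙ(K) satisfying A·J = J·A is at most i₂(GL_{n/2}(K)) · q^{n²/4 − (n−2)} + q^{n²/4}, where i₂(GL_{n/2}(K)) denotes the number of involutions of GL_{n/2}(K). -/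
/-!
Commuting with `J` forces `A = [[a, 0], [c, a]]`, and in characteristic 2, `A² = 1` says exactly
that `a² = 1` and `ac = ca`. So `A` is determined by some `a ∈ GL_m` with `a² = 1` together with
an element `c` of the centralizer of `a`. For `a = 1` there are at most `q^{m²}` choices of `c`.
For an involution `a`, the matrix `N = a + 1` is nonzero with `N² = 0`, and its centralizer has
dimension at most `m² - 2m + 2`. To see this, pick `v` with `Nv ≠ 0` and a functional `α` with
`α(Nv) = 1`. The map `c ↦ (cv, α ∘ c)` then lands in a subspace of codimension 2, because
`α(cv) = (α ∘ c)(v)` and `(α ∘ N)(cv) = (α ∘ c)(Nv)`. Its kernel consists of maps that vanish on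
`span {v, Nv}` and take values in `ker α ∩ ker (α ∘ N)`, so it has dimension at most `(m - 2)²`.
-/

open Module LinearMap Submodule

section LinearAlgebra

variable {K V M : Type*} [Field K] [AddCommGroup V] [Module K V] [AddCommGroup M] [Module K M]

lemma surjective_prod_of_apply_eq_one {f g : M →ₗ[K] K} {x y : M}
    (hfx : f x = 1) (hgx : g x = 0) (hgy : g y = 1) : Function.Surjective (f.prod g) := by
  rintro ⟨s, t⟩
  refine ⟨(s - t * f y) • x + t • y, ?_⟩
  simp [hfx, hgx, hgy]

lemma finrank_ker_prod_add_two [FiniteDimensional K M] {f g : M →ₗ[K] K}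
    (h : Function.Surjective (f.prod g)) : finrank K (ker (f.prod g)) + 2 = finrank K M := by
  rw [← finrank_range_add_finrank_ker (f.prod g), range_eq_top.mpr h, finrank_top,
    finrank_prod, finrank_self, add_comm]

variable [FiniteDimensional K V]

lemma finrank_le_of_le_ker_of_range_le (S : Submodule K (Module.End K V))
    (P Q : Submodule K V) (h : ∀ c ∈ S, P ≤ ker c ∧ range c ≤ Q) :
    finrank K S ≤ finrank K (V ⧸ P) * finrank K Q := by
  let F : S →ₗ[K] V ⧸ P →ₗ[K] Q :=
    { toFun := fun c => P.liftQ ((c : Module.End K V).codRestrict Q fun x => (h c c.2).2 ⟨x, rfl⟩)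
        (by rw [ker_codRestrict]; exact (h c c.2).1)
      map_add' := fun c d => by ext x; simp
      map_smul' := fun a c => by ext x; simp }
  have hF : Function.Injective F := fun c d hcd => by
    ext x
    simpa [F] using congrArg (fun φ : V ⧸ P →ₗ[K] Q => (φ (P.mkQ x) : V)) hcd
  simpa [finrank_linearMap] using finrank_le_finrank_of_injective hF

def evalPair (v : V) (α : Dual K V) : Module.End K V →ₗ[K] V × Dual K V :=
  (applyₗ v).prod (compRight K α)

section SquareZero

variable {N : Module.End K V} {v : V} {α : Dual K V}

lemma finrank_range_evalPair_centralizer_add_two_le (hN2 : N * N = 0) (hα : α (N v) = 1) :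
    finrank K (range ((evalPair v α).domRestrict (Subalgebra.centralizer K {N}).toSubmodule)) + 2
      ≤ 2 * finrank K V := by
  let f : V × Dual K V →ₗ[K] K := α ∘ₗ fst K V _ - applyₗ v ∘ₗ snd K V _
  let g : V × Dual K V →ₗ[K] K := (α ∘ₗ N) ∘ₗ fst K V _ - applyₗ (N v) ∘ₗ snd K V _
  have hNN : α (N (N v)) = 0 := by simp [← Module.End.mul_apply, hN2]
  have hsurj : Function.Surjective (f.prod g) :=
    surjective_prod_of_apply_eq_one (x := (0, -(α ∘ₗ N))) (y := (0, -α))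
      (by simp [f, hα]) (by simp [g, hNN]) (by simp [g, hα])
  have hrange : range ((evalPair v α).domRestrict (Subalgebra.centralizer K {N}).toSubmodule)
      ≤ ker (f.prod g) := by
    rintro _ ⟨⟨c, hc⟩, rfl⟩
    have hcomm : N * c = c * N := (Subalgebra.mem_centralizer_iff K).mp hc N rfl
    simp [f, g, evalPair, ← Module.End.mul_apply, hcomm]
  have hker := finrank_ker_prod_add_two hsurj
  rw [finrank_prod, Subspace.dual_finrank_eq] at hker
  have := Submodule.finrank_mono hrange
  omega

lemma finrank_ker_evalPair_centralizer_le (hN2 : N * N = 0) (hα : α (N v) = 1) :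
    finrank K (ker ((evalPair v α).domRestrict (Subalgebra.centralizer K {N}).toSubmodule))
      ≤ (finrank K V - 2) * (finrank K V - 2) := by
  set S := (Subalgebra.centralizer K {N}).toSubmodule
  have hNN : N (N v) = 0 := by simp [← Module.End.mul_apply, hN2]
  have hindep : LinearIndependent K ![v, N v] := by
    refine LinearIndependent.pair_iff.mpr fun s t hst => ?_
    have hs : s = 0 := by simpa [hα, hNN] using congrArg (α ∘ₗ N) hst
    subst hs
    simpa [hα] using congrArg α hst
  have hsurj : Function.Surjective (α.prod (α ∘ₗ N)) :=
    surjective_prod_of_apply_eq_one (x := N v) (y := v) hα (by simp [hNN]) hα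
  have hP := (span K (Set.range ![v, N v])).finrank_quotient_add_finrank
  rw [finrank_span_eq_card hindep, Fintype.card_fin] at hP
  have hQ := finrank_ker_prod_add_two hsurj
  rw [← Submodule.finrank_map_subtype_eq S]
  refine (finrank_le_of_le_ker_of_range_le _ (span K (Set.range ![v, N v]))
    (ker (α.prod (α ∘ₗ N))) ?_).trans_eq (by congr 1 <;> omega)
  rintro _ ⟨⟨c, hc⟩, hker, rfl⟩
  have hcomm : N * c = c * N := (Subalgebra.mem_centralizer_iff K).mp hc N rfl
  obtain ⟨hcv, hαc⟩ : c v = 0 ∧ α ∘ₗ c = 0 := by simpa [evalPair] using hker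
  have hαc' (x : V) : α (c x) = 0 := by simpa using LinearMap.congr_fun hαc x
  constructor
  · rw [span_le]
    rintro _ ⟨i, rfl⟩
    fin_cases i
    · simpa using hcv
    · simp [← Module.End.mul_apply, ← hcomm, Module.End.mul_apply N c, hcv]
  · rintro _ ⟨x, rfl⟩
    simp [hαc', ← Module.End.mul_apply N c, hcomm]

theorem finrank_centralizer_le_of_mul_self_eq_zero (hN : N ≠ 0) (hN2 : N * N = 0) :
    finrank K (Subalgebra.centralizer K {N}) ≤ finrank K V ^ 2 - (2 * finrank K V - 2) := by
  obtain ⟨v, hv⟩ : ∃ v, N v ≠ 0 := by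
    by_contra! h
    exact hN (LinearMap.ext h)
  obtain ⟨α, hα⟩ := Module.Projective.exists_dual_eq_one K hv
  have hrange := finrank_range_evalPair_centralizer_add_two_le hN2 hα
  have hker := finrank_ker_evalPair_centralizer_le hN2 hα
  have hsum := finrank_range_add_finrank_ker
    ((evalPair v α).domRestrict (Subalgebra.centralizer K {N}).toSubmodule)
  rw [Subalgebra.finrank_toSubmodule] at hsum
  have hle : finrank K (Subalgebra.centralizer K {N})
      ≤ (2 * finrank K V - 2) + (finrank K V - 2) * (finrank K V - 2) := by omega
  have harith (d : ℕ) : (2 * d - 2) + (d - 2) * (d - 2) ≤ d ^ 2 - (2 * d - 2) := by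
    obtain _ | _ | k := d <;> grind
  exact hle.trans (harith _)

end SquareZero

end LinearAlgebra

lemma add_self_eq_zero_of_charTwo (R : Type*) {M : Type*} [Ring R] [CharP R 2] [AddCommGroup M]
    [Module R M] (x : M) : x + x = 0 := by
  rw [← two_smul R x, CharTwo.two_eq_zero, zero_smul]

lemma Units.val_mul_self_eq_one_of_orderOf_eq_two {M : Type*} [Monoid M] {u : Mˣ}
    (hu : orderOf u = 2) : (u : M) * u = 1 ∧ (u : M) ≠ 1 := by
  obtain ⟨hsq, hne⟩ := orderOf_eq_prime_iff.mp hu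
  exact ⟨by simpa [sq] using congrArg Units.val hsq, fun h => hne (Units.ext h)⟩

lemma Fintype.sum_sq_eq_one_eq_add_sum_orderOf_eq_two {G M : Type*} [Monoid G] [Fintype G]
    [DecidableEq G] [AddCommMonoid M] (f : G → M) :
    ∑ g : {g : G // g ^ 2 = 1}, f g = f 1 + ∑ g : {g : G // orderOf g = 2}, f g := by
  rw [← Finset.sum_subtype (Finset.univ.filter fun g : G => g ^ 2 = 1) (by simp),
    ← Finset.sum_subtype (Finset.univ.filter fun g : G => orderOf g = 2) (by simp)]
  have hsplit : Finset.univ.filter (fun g : G => g ^ 2 = 1)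
      = insert 1 (Finset.univ.filter fun g => orderOf g = 2) := by
    ext g
    by_cases hg : g = 1 <;> simp [hg, orderOf_eq_prime_iff]
  rw [hsplit, Finset.sum_insert (by simp)]

namespace Matrix

section Blocks

variable {R m : Type*} [Ring R] [Fintype m] [DecidableEq m]

lemma eq_fromBlocks_of_mul_comm_fromBlocks_one_zero_one_one
    {A : Matrix (m ⊕ m) (m ⊕ m) R} (h : A * fromBlocks 1 0 1 1 = fromBlocks 1 0 1 1 * A) :
    A = fromBlocks A.toBlocks₁₁ 0 A.toBlocks₂₁ A.toBlocks₁₁ := by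
  rw [← fromBlocks_toBlocks A, fromBlocks_multiply, fromBlocks_multiply] at h
  simp only [mul_one, mul_zero, add_zero, one_mul, zero_mul, zero_add] at h
  obtain ⟨h₁₁, -, h₂₁, -⟩ := fromBlocks_inj.mp h
  conv_lhs => rw [← fromBlocks_toBlocks A]
  rw [add_eq_left.mp h₁₁, add_left_cancel (h₂₁.trans (add_comm _ _))]

lemma mul_self_eq_one_and_commute_of_fromBlocks_mul_self_eq_one [CharP R 2]
    {a c : Matrix m m R} (h : fromBlocks a 0 c a * fromBlocks a 0 c a = 1) :
    a * a = 1 ∧ a * c = c * a := by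
  rw [fromBlocks_multiply, ← fromBlocks_one] at h
  simp only [mul_zero, add_zero, zero_mul, zero_add] at h
  obtain ⟨haa, -, hca, -⟩ := fromBlocks_inj.mp h
  refine ⟨haa, ?_⟩
  rw [add_eq_zero_iff_eq_neg.mp hca, neg_eq_of_add_eq_zero_left (add_self_eq_zero_of_charTwo R _)]

end Blocks

lemma card_commute_le_of_mul_self_eq_one {K n : Type*} [Field K] [Fintype K] [CharP K 2]
    [Fintype n] [DecidableEq n] {X : Matrix n n K} (hX2 : X * X = 1) (hX1 : X ≠ 1) :
    Nat.card {c : Matrix n n K // X * c = c * X}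
      ≤ Fintype.card K ^ (Fintype.card n ^ 2 - (2 * Fintype.card n - 2)) := by
  let e := toLinAlgEquiv' (R := K) (n := n)
  have hN2 : e (X + 1) * e (X + 1) = 0 := by
    rw [← map_mul, ← map_zero e]
    congr 1
    calc (X + 1) * (X + 1) = (X + X) + (1 + 1) := by
          rw [add_mul, mul_add, mul_add, hX2, mul_one, one_mul, mul_one]; abel
      _ = 0 := by rw [add_self_eq_zero_of_charTwo K, add_self_eq_zero_of_charTwo K, add_zero]
  have hN : e (X + 1) ≠ 0 := by
    rw [Ne, map_eq_zero_iff e e.injective]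
    intro h
    apply hX1
    calc X = (X + 1) + 1 := by rw [add_assoc, add_self_eq_zero_of_charTwo K, add_zero]
      _ = 1 := by rw [h, zero_add]
  have hcard : Nat.card {c : Matrix n n K // X * c = c * X}
      = Nat.card (Subalgebra.centralizer K {e (X + 1)}) := by
    refine Nat.card_congr (e.toEquiv.subtypeEquiv fun c => ?_)
    simp [Subalgebra.mem_centralizer_iff, e, ← map_mul, add_mul, mul_add]
  rw [hcard, Module.natCard_eq_pow_finrank (K := K), Nat.card_eq_fintype_card]
  refine Nat.pow_le_pow_right Fintype.card_pos ?_
  simpa using finrank_centralizer_le_of_mul_self_eq_zero hN hN2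

lemma card_le_card_sigma_of_commute_fromBlocks {R m : Type*} [CommRing R] [Finite R] [CharP R 2]
    [Fintype m] [DecidableEq m] {J : GL (m ⊕ m) R}
    (hJ : (J : Matrix (m ⊕ m) (m ⊕ m) R) = fromBlocks 1 0 1 1) :
    Nat.card {A : GL (m ⊕ m) R // orderOf A = 2 ∧ A * J = J * A}
      ≤ Nat.card (Σ u : {u : GL m R // u ^ 2 = 1},
          {c : Matrix m m R // (u.1 : Matrix m m R) * c = c * u.1}) := by
  let F (p : Σ u : {u : GL m R // u ^ 2 = 1},
      {c : Matrix m m R // (u.1 : Matrix m m R) * c = c * u.1}) :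
      Matrix (m ⊕ m) (m ⊕ m) R := fromBlocks p.1.1 0 p.2.1 p.1.1
  have hmem (A : {A : GL (m ⊕ m) R // orderOf A = 2 ∧ A * J = J * A}) :
      (A.1 : Matrix (m ⊕ m) (m ⊕ m) R) ∈ Set.range F := by
    obtain ⟨A, hord, hcomm⟩ := A
    have hA := eq_fromBlocks_of_mul_comm_fromBlocks_one_zero_one_one (R := R)
      (by simpa [hJ] using congrArg Units.val hcomm)
    have hsq := (Units.val_mul_self_eq_one_of_orderOf_eq_two hord).1
    rw [hA] at hsq
    obtain ⟨haa, hac⟩ := mul_self_eq_one_and_commute_of_fromBlocks_mul_self_eq_one hsq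
    exact ⟨⟨⟨⟨_, _, haa, haa⟩, Units.ext (by simpa [sq] using haa)⟩, ⟨_, hac⟩⟩, hA.symm⟩
  refine le_trans (Nat.card_le_card_of_injective (fun A => (⟨A.1, hmem A⟩ : Set.range F))
    fun A B h => ?_) (Finite.card_range_le F)
  exact Subtype.ext (Units.ext (congrArg Subtype.val h))

end Matrix

theorem involutions_commuting_with_J_general (f : ℕ) (q : ℕ) (hq : q = 2 ^ f)
    (K : Type) [Field K] [Fintype K] (hK : Fintype.card K = q)
    (n m : ℕ) (hnm : n = 2 * m)
    (J : Matrix.GeneralLinearGroup (Fin m ⊕ Fin m) K)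
    (hJ : (J : Matrix (Fin m ⊕ Fin m) (Fin m ⊕ Fin m) K) = Matrix.fromBlocks 1 0 1 1) :
    Nat.card {A : Matrix.GeneralLinearGroup (Fin m ⊕ Fin m) K //
        orderOf A = 2 ∧ A * J = J * A} ≤
      Nat.card {X : Matrix.GeneralLinearGroup (Fin m) K // orderOf X = 2} *
          q ^ (n ^ 2 / 4 - (n - 2)) + q ^ (n ^ 2 / 4) := by
  classical
  have : CharP K 2 := charP_of_card_eq_prime_pow (hK.trans hq)
  have hn2 : n ^ 2 / 4 = m ^ 2 := by subst hnm; ring_nf; omega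
  rw [hn2, hnm, ← hK]
  let C (X : Matrix (Fin m) (Fin m) K) := {c : Matrix (Fin m) (Fin m) K // X * c = c * X}
  calc _ ≤ Nat.card (Σ u : {u : GL (Fin m) K // u ^ 2 = 1}, C u.1) :=
        Matrix.card_le_card_sigma_of_commute_fromBlocks hJ
    _ = Nat.card (C 1) + ∑ u : {u : GL (Fin m) K // orderOf u = 2}, Nat.card (C u.1) :=
        Nat.card_sigma.trans
          (Fintype.sum_sq_eq_one_eq_add_sum_orderOf_eq_two fun u : GL (Fin m) K => Nat.card (C u))
    _ ≤ Nat.card (Matrix (Fin m) (Fin m) K)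
          + Nat.card {u : GL (Fin m) K // orderOf u = 2} * Fintype.card K ^ (m ^ 2 - (2 * m - 2)) := by
      refine add_le_add (Finite.card_subtype_le _) ?_
      rw [Nat.card_eq_fintype_card, ← Finset.card_univ, ← smul_eq_mul]
      refine Finset.sum_le_card_nsmul _ _ _ fun u _ => ?_
      obtain ⟨hsq, hne⟩ := Units.val_mul_self_eq_one_of_orderOf_eq_two u.2
      simpa using Matrix.card_commute_le_of_mul_self_eq_one hsq hne
    _ = _ := by
      rw [add_comm, Module.natCard_eq_pow_finrank (K := K) (V := Matrix (Fin m) (Fin m) K),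
        Module.finrank_matrix, Module.finrank_self, Nat.card_eq_fintype_card (α := K),
        Fintype.card_fin, mul_one, sq]

theorem involutions_commuting_with_J (f : ℕ) (hf : 1 ≤ f) (q : ℕ) (hq : q = 2 ^ f)
    (K : Type) [Field K] [Fintype K] (hK : Fintype.card K = q)
    (n m : ℕ) (hnm : n = 2 * m) (hn : 4 ≤ n)
    (J : Matrix.GeneralLinearGroup (Fin m ⊕ Fin m) K)
    (hJ : (J : Matrix (Fin m ⊕ Fin m) (Fin m ⊕ Fin m) K) = Matrix.fromBlocks 1 0 1 1) :
    Nat.card {A : Matrix.GeneralLinearGroup (Fin m ⊕ Fin m) K //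
        orderOf A = 2 ∧ A * J = J * A} ≤
      Nat.card {X : Matrix.GeneralLinearGroup (Fin m) K // orderOf X = 2} *
          q ^ (n ^ 2 / 4 - (n - 2)) + q ^ (n ^ 2 / 4) :=
  involutions_commuting_with_J_general f q hq K hK n m hnm J hJ
end

section
/- Let f ≥ 1 be an integer, q = 2^f, let K be a finite field with |K| = q, and let m ≥ 2 and ℓ be integers with 1 ≤ ℓ and 2ℓ ≤ m. Let j_ℓ(m) ∈ Matrix (Fin m) (Fin m) K be the block matrix [[I_ℓ, 0, 0], [0, I_{m−2ℓ}, 0], [I_ℓ, 0, I_ℓ]] (identity diagonal blocks of sizes ℓ, m−2ℓ, ℓ, with the only nonzero off-diagonal block being I_ℓ in the lower-left corner). Then the number of matrices R ∈ Matrix (Fin m) (Fin m) K satisfying R·j_ℓ(m) = j_ℓ(m)·R is at most q^{ℓ² + (m−ℓ)²}. -/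
/-!
Write `j_ℓ(m) = 1 + N`, where `N` sends the basis vector `e_j` to `e_{j+m-ℓ}` for `j < ℓ` and
kills the others. Commuting with `N` means `R i (j + m - ℓ) = R (i - (m - ℓ)) j` entrywise,
an entry with an index out of range being read as `0`. Hence the upper-right `ℓ × (m - ℓ)`
block of `R` vanishes, so do the entries in rows `< m - ℓ` and columns `≥ m - ℓ`, and the
lower-right `ℓ × ℓ` block repeats the upper-left one. So `R` is determined by its upper-left
`ℓ × ℓ` block and its lower-left `(m - ℓ) × (m - ℓ)` block; as the commutant is an additive
group, it suffices to see this for an `R` with both blocks zero.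
-/

open Matrix

def suzukiShift (K : Type*) [Zero K] [One K] (m ℓ : ℕ) : Matrix (Fin m) (Fin m) K :=
  Matrix.of fun i j => if (i : ℕ) = j + (m - ℓ) ∧ (j : ℕ) < ℓ then 1 else 0

section

variable {K : Type*} {m ℓ : ℕ}

theorem mul_suzukiShift_apply [NonAssocSemiring K] (R : Matrix (Fin m) (Fin m) K)
    (i j : Fin m) :
    (R * suzukiShift K m ℓ) i j =
      if h : (j : ℕ) < ℓ then R i ⟨j + (m - ℓ), by omega⟩ else 0 := by
  rw [mul_apply]
  split_ifs with h
  · rw [Finset.sum_eq_single_of_mem ⟨j + (m - ℓ), by omega⟩ (Finset.mem_univ _)]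
    · simp [suzukiShift, h]
    · intro k _ hk
      simp only [ne_eq, Fin.ext_iff, suzukiShift, of_apply, mul_ite, mul_one, mul_zero,
        ite_eq_right_iff, and_imp] at hk ⊢
      omega
  · simp [suzukiShift, h]

theorem suzukiShift_mul_apply [NonAssocSemiring K] (R : Matrix (Fin m) (Fin m) K)
    (i j : Fin m) :
    (suzukiShift K m ℓ * R) i j =
      if h : m - ℓ ≤ (i : ℕ) then R ⟨i - (m - ℓ), by omega⟩ j else 0 := by
  rw [mul_apply]
  split_ifs with h
  · rw [Finset.sum_eq_single_of_mem ⟨i - (m - ℓ), by omega⟩ (Finset.mem_univ _)]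
    · simp only [suzukiShift, of_apply, ite_mul, one_mul, zero_mul, ite_eq_left_iff, not_and,
        not_lt]
      omega
    · intro k _ hk
      simp only [ne_eq, Fin.ext_iff, suzukiShift, of_apply, ite_mul, one_mul, zero_mul,
        ite_eq_right_iff, and_imp] at hk ⊢
      omega
  · refine Finset.sum_eq_zero fun k _ => ?_
    simp only [suzukiShift, of_apply, ite_mul, one_mul, zero_mul, ite_eq_right_iff, and_imp]
    omega

theorem Commute.suzukiShift_entry [NonAssocSemiring K] {R : Matrix (Fin m) (Fin m) K}
    (hR : Commute R (suzukiShift K m ℓ)) (i j : Fin m) :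
    (if h : (j : ℕ) < ℓ then R i ⟨j + (m - ℓ), by omega⟩ else 0) =
      if h : m - ℓ ≤ (i : ℕ) then R ⟨i - (m - ℓ), by omega⟩ j else 0 := by
  rw [← mul_suzukiShift_apply, ← suzukiShift_mul_apply, hR.eq]

theorem eq_zero_of_commute_suzukiShift [NonAssocSemiring K] {R : Matrix (Fin m) (Fin m) K}
    (hR : Commute R (suzukiShift K m ℓ))
    (hupper : ∀ i j : Fin m, (i : ℕ) < ℓ → (j : ℕ) < ℓ → R i j = 0)
    (hlower : ∀ i j : Fin m, ℓ ≤ (i : ℕ) → (j : ℕ) < m - ℓ → R i j = 0) : R = 0 := by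
  ext i j
  rw [Matrix.zero_apply]
  by_cases hi : (i : ℕ) < ℓ
  · by_cases hj : (j : ℕ) < ℓ
    · exact hupper i j hi hj
    · simpa [hj] using (hR.suzukiShift_entry ⟨i + (m - ℓ), by omega⟩ j).symm
  · by_cases hj : (j : ℕ) < m - ℓ
    · exact hlower i j (by omega) hj
    · have hentry := hR.suzukiShift_entry i ⟨j - (m - ℓ), by omega⟩
      have hj' : (j : ℕ) - (m - ℓ) + (m - ℓ) = j := by omega
      rw [dif_pos (show (j : ℕ) - (m - ℓ) < ℓ by omega)] at hentry
      simp only [hj'] at hentry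
      rw [hentry]
      split_ifs
      · exact hupper _ _ (show (i : ℕ) - (m - ℓ) < ℓ by omega)
          (show (j : ℕ) - (m - ℓ) < ℓ by omega)
      · rfl

theorem eq_of_commute_suzukiShift [Ring K] (hℓ : ℓ ≤ m) {R S : Matrix (Fin m) (Fin m) K}
    (hR : Commute R (suzukiShift K m ℓ)) (hS : Commute S (suzukiShift K m ℓ))
    (hupper : R.submatrix (Fin.castLE hℓ) (Fin.castLE hℓ) =
      S.submatrix (Fin.castLE hℓ) (Fin.castLE hℓ))
    (hlower : R.submatrix (fun a : Fin (m - ℓ) => ⟨ℓ + a, by omega⟩) (Fin.castLE (m.sub_le ℓ)) =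
      S.submatrix (fun a : Fin (m - ℓ) => ⟨ℓ + a, by omega⟩) (Fin.castLE (m.sub_le ℓ))) :
    R = S := by
  refine sub_eq_zero.mp (eq_zero_of_commute_suzukiShift (hR.sub_left hS) ?_ ?_)
  · intro i j hi hj
    simpa [sub_eq_zero] using congrFun (congrFun hupper ⟨i, hi⟩) ⟨j, hj⟩
  · intro i j hi hj
    have hi' : ℓ + ((i : ℕ) - ℓ) = i := by omega
    simpa [sub_eq_zero, hi'] using congrFun (congrFun hlower ⟨i - ℓ, by omega⟩) ⟨j, hj⟩

theorem eq_one_add_suzukiShift [NonAssocSemiring K] (hℓm : 2 * ℓ ≤ m)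
    {J : Matrix (Fin m) (Fin m) K}
    (hJ : ∀ i j : Fin m, J i j =
      if i = j then 1 else if (i : ℕ) = (j : ℕ) + (m - ℓ) ∧ (j : ℕ) < ℓ then 1 else 0) :
    J = 1 + suzukiShift K m ℓ := by
  ext i j
  rw [hJ, Matrix.add_apply, one_apply]
  by_cases hij : i = j
  · subst hij
    have : ¬(m - ℓ = 0 ∧ (i : ℕ) < ℓ) := by omega
    simp [suzukiShift, this]
  · simp [suzukiShift, hij]

end

theorem centralizer_of_suzuki_form_bound_general (q : ℕ)
    (K : Type) [Field K] [Fintype K] (hK : Fintype.card K = q)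
    (m ℓ : ℕ) (hℓm : 2 * ℓ ≤ m)
    (J : Matrix (Fin m) (Fin m) K)
    (hJ : ∀ i j : Fin m, J i j =
      if i = j then 1
      else if (i : ℕ) = (j : ℕ) + (m - ℓ) ∧ (j : ℕ) < ℓ then 1 else 0) :
    Nat.card {R : Matrix (Fin m) (Fin m) K // R * J = J * R} ≤ q ^ (ℓ ^ 2 + (m - ℓ) ^ 2) := by
  have hℓ : ℓ ≤ m := by omega
  have hJN := eq_one_add_suzukiShift hℓm hJ
  have hcomm (R : {R : Matrix (Fin m) (Fin m) K // R * J = J * R}) :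
      Commute R.1 (suzukiShift K m ℓ) := by
    simpa [hJN] using (show Commute R.1 J from R.2).sub_right (Commute.one_right R.1)
  let blocks (R : {R : Matrix (Fin m) (Fin m) K // R * J = J * R}) :
      Matrix (Fin ℓ) (Fin ℓ) K × Matrix (Fin (m - ℓ)) (Fin (m - ℓ)) K :=
    (R.1.submatrix (Fin.castLE hℓ) (Fin.castLE hℓ),
      R.1.submatrix (fun a : Fin (m - ℓ) => ⟨ℓ + a, by omega⟩) (Fin.castLE (m.sub_le ℓ)))
  have hblocks : Function.Injective blocks := fun R S h =>
    Subtype.ext (eq_of_commute_suzukiShift hℓ (hcomm R) (hcomm S) (congrArg Prod.fst h)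
      (congrArg Prod.snd h))
  calc Nat.card {R : Matrix (Fin m) (Fin m) K // R * J = J * R}
      ≤ Nat.card (Matrix (Fin ℓ) (Fin ℓ) K × Matrix (Fin (m - ℓ)) (Fin (m - ℓ)) K) :=
        Nat.card_le_card_of_injective blocks hblocks
    _ = q ^ (ℓ ^ 2 + (m - ℓ) ^ 2) := by
        simp [Nat.card_eq_fintype_card, Matrix, hK, pow_add, pow_two, pow_mul]

theorem centralizer_of_suzuki_form_bound (f : ℕ) (hf : 1 ≤ f) (q : ℕ) (hq : q = 2 ^ f)
    (K : Type) [Field K] [Fintype K] (hK : Fintype.card K = q)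
    (m ℓ : ℕ) (hm : 2 ≤ m) (hℓ : 1 ≤ ℓ) (hℓm : 2 * ℓ ≤ m)
    (J : Matrix (Fin m) (Fin m) K)
    (hJ : ∀ i j : Fin m, J i j =
      if i = j then 1
      else if (i : ℕ) = (j : ℕ) + (m - ℓ) ∧ (j : ℕ) < ℓ then 1 else 0) :
    Nat.card {R : Matrix (Fin m) (Fin m) K // R * J = J * R} ≤ q ^ (ℓ ^ 2 + (m - ℓ) ^ 2) :=
  centralizer_of_suzuki_form_bound_general q K hK m ℓ hℓm J hJ
end

section
/- Let f ≥ 1 be an integer, q = 2^f, and let K be a finite field with |K| = q. Then the number of involutions of the special linear group SL₄(K) is strictly greater than q⁵·(q³ − 1). -/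
/-!
In characteristic 2, `N ↦ 1 + N` sends nonzero matrices with `N * N = 0` injectively to
involutions of `SL₄(K)`, since `(1 + N)² = 1 + 2N = 1`. Such matrices are counted from below by
five explicit families: for rank two, `N = P M Q` with `M ∈ GL₂(K)`, the plane `col P` in one of
three Schubert cells and `Q P = 0`; for rank one, `N = u vᵀ` with `v ⬝ᵥ u = 0`. The families are
disjoint and have `q⁴·|GL₂| + q³·|GL₂| + q²·|GL₂| + q³(q³ - 1) + (q³ - 1) = (q³ - 1)(q⁵ + 1)`
members, which exceeds `q⁵(q³ - 1)`.
-/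

open Matrix Function

section CharTwo

variable {n R : Type*} [Fintype n] [DecidableEq n] [CommRing R] [CharP R 2]

theorem Matrix.one_add_mul_self_eq_one {N : Matrix n n R} (hN : N * N = 0) :
    (1 + N) * (1 + N) = 1 :=
  calc (1 + N) * (1 + N) = 1 + (2 : R) • N + N * N := by rw [two_smul]; noncomm_ring
    _ = 1 := by rw [hN, CharTwo.two_eq_zero, zero_smul, add_zero, add_zero]

variable [NoZeroDivisors R]

theorem Matrix.det_one_add_eq_one {N : Matrix n n R} (hN : N * N = 0) :
    (1 + N).det = 1 :=
  CharTwo.sq_injective <| by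
    simp only [sq, ← det_mul, one_add_mul_self_eq_one hN, det_one, one_mul]

namespace Matrix.SpecialLinearGroup

def oneAdd {N : Matrix n n R} (hN : N * N = 0) : SpecialLinearGroup n R :=
  ⟨1 + N, det_one_add_eq_one hN⟩

@[simp]
theorem coe_oneAdd {N : Matrix n n R} (hN : N * N = 0) :
    (oneAdd hN : Matrix n n R) = 1 + N :=
  rfl

theorem orderOf_oneAdd {N : Matrix n n R} (hN : N * N = 0) (hN₀ : N ≠ 0) :
    orderOf (oneAdd hN) = 2 :=
  orderOf_eq_prime (Subtype.ext <| by simp [sq, one_add_mul_self_eq_one hN])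
    fun h => hN₀ <| by simpa using congrArg (↑· : SpecialLinearGroup n R → Matrix n n R) h

theorem card_mul_self_eq_zero_le_card_orderOf_eq_two [Fintype R] :
    Nat.card {N : Matrix n n R // N * N = 0 ∧ N ≠ 0} ≤
      Nat.card {A : SpecialLinearGroup n R // orderOf A = 2} :=
  Nat.card_le_card_of_injective (fun N => ⟨oneAdd N.2.1, orderOf_oneAdd N.2.1 N.2.2⟩)
    fun N N' h => Subtype.ext <| by
      simpa using congrArg (fun A : {A : SpecialLinearGroup n R // _} => (A : Matrix n n R)) h

end Matrix.SpecialLinearGroup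

end CharTwo

theorem Function.Injective.sumElim_of_separating {α β γ : Type*} {f : α → γ} {g : β → γ}
    (p : γ → Prop) (hf : Injective f) (hg : Injective g) (hpf : ∀ a, p (f a))
    (hpg : ∀ b, ¬p (g b)) : Injective (Sum.elim f g) :=
  hf.sumElim hg fun a b h => hpg b (h ▸ hpf a)

section Sandwich

variable {R m n k ι : Type*} [CommRing R] [Fintype k]

theorem Matrix.mul_mul_mul_self_eq_zero [Fintype n] {P : Matrix n k R} {Q : Matrix k n R}
    (M : Matrix k k R) (hQP : Q * P = 0) : (P * M * Q) * (P * M * Q) = 0 := by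
  rw [Matrix.mul_assoc (P * M), ← Matrix.mul_assoc Q, ← Matrix.mul_assoc Q, hQP,
    Matrix.zero_mul, Matrix.zero_mul, Matrix.mul_zero]

theorem Matrix.submatrix_mul_mul (P : Matrix m k R) (M : Matrix k k R) (Q : Matrix k n R)
    (s : k → m) (t : k → n) :
    (P * M * Q).submatrix s t = P.submatrix s id * M * Q.submatrix id t := by
  rw [submatrix_mul _ _ _ id _ bijective_id, submatrix_mul _ _ _ id _ bijective_id,
    submatrix_id_id]

variable [DecidableEq k]

theorem Matrix.submatrix_mul_mul_of_submatrix_eq_one {P : Matrix m k R} {Q : Matrix k n R}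
    {s : k → m} {t : k → n} (hP : P.submatrix s id = 1) (hQ : Q.submatrix id t = 1)
    (M : Matrix k k R) : (P * M * Q).submatrix s t = M := by
  rw [submatrix_mul_mul, hP, hQ, Matrix.one_mul, Matrix.mul_one]

theorem Matrix.injective_mul_mul_of_submatrix_eq_one {P : ι → Matrix m k R}
    {Q : ι → Matrix k n R} {s : k → m} {t : k → n} (hP_inj : Injective P)
    (hP : ∀ i, (P i).submatrix s id = 1) (hQ : ∀ i, (Q i).submatrix id t = 1) :
    Injective fun x : GL k R × ι => P x.2 * (x.1 : Matrix k k R) * Q x.2 := by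
  rintro ⟨M, i⟩ ⟨M', i'⟩ h
  have hM : M = M' := Units.ext <| by
    simpa only [submatrix_mul_mul_of_submatrix_eq_one (hP _) (hQ _)] using
      congrArg (submatrix · s t) h
  subst hM
  have hPM : P i * (M : Matrix k k R) = P i' * (M : Matrix k k R) := by
    simpa only [submatrix_mul _ _ _ id _ bijective_id, submatrix_id_id, hQ, Matrix.mul_one] using
      congrArg (submatrix · id t) h
  obtain rfl : i = i' := hP_inj <| by
    simpa [Matrix.mul_assoc] using congrArg (· * ((M⁻¹ : GL k R) : Matrix k k R)) hPM
  rfl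

theorem Matrix.det_submatrix_mul_mul_eq_zero {P : Matrix m k R} {Q : Matrix k n R} {s : k → m}
    (t : k → n) (M : Matrix k k R) (hP : (P.submatrix s id).det = 0) :
    ((P * M * Q).submatrix s t).det = 0 := by
  rw [submatrix_mul_mul, det_mul, det_mul, hP, zero_mul, zero_mul]

theorem Matrix.ne_zero_of_isUnit_det_submatrix [Nontrivial R] [Nonempty k] {N : Matrix m n R} {s : k → m}
    {t : k → n} (h : IsUnit (N.submatrix s t).det) : N ≠ 0 := by
  rintro rfl
  simp at h

end Sandwich

section RankOne

variable {R m n : Type*} [CommRing R]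

theorem Matrix.vecMulVec_mul_self_eq_zero [Fintype n] {u v : n → R} (h : v ⬝ᵥ u = 0) :
    vecMulVec u v * vecMulVec u v = 0 := by
  rw [vecMulVec_mul_vecMulVec, h, zero_smul, vecMulVec_zero]

theorem Matrix.eq_of_vecMulVec_eq [IsDomain R] {u u' : m → R} {v : n → R} (hv : v ≠ 0)
    (h : vecMulVec u v = vecMulVec u' v) : u = u' := by
  obtain ⟨j, hj⟩ := Function.ne_iff.mp hv
  funext i
  exact mul_right_cancel₀ hj (congrFun₂ h i j)

theorem Matrix.det_submatrix_vecMulVec [Fintype m] [DecidableEq m] [Nontrivial m]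
    (u : n → R) (v : n → R) (s t : m → n) : ((vecMulVec u v).submatrix s t).det = 0 :=
  det_vecMulVec (u ∘ s) (v ∘ t)

end RankOne

namespace SquareZero

variable {K : Type*} [Field K]

/- The column spaces of `P₁`, `P₂`, `P₃` run through three Schubert cells of planes in `K⁴`
(pivot rows `{0, 1}`, `{0, 2}`, `{1, 2}`), and `Qᵢ` is the matching normalised basis of
their annihilator, with an identity block in columns `{2, 3}`, `{1, 3}`, `{0, 3}`. -/
def P₁ (v : Fin 4 → K) : Matrix (Fin 4) (Fin 2) K := !![1, 0; 0, 1; v 0, v 1; v 2, v 3]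
def Q₁ (v : Fin 4 → K) : Matrix (Fin 2) (Fin 4) K := !![-v 0, -v 1, 1, 0; -v 2, -v 3, 0, 1]
def P₂ (v : Fin 3 → K) : Matrix (Fin 4) (Fin 2) K := !![1, 0; v 0, 0; 0, 1; v 1, v 2]
def Q₂ (v : Fin 3 → K) : Matrix (Fin 2) (Fin 4) K := !![-v 0, 1, 0, 0; -v 1, 0, -v 2, 1]
def P₃ (v : Fin 2 → K) : Matrix (Fin 4) (Fin 2) K := !![0, 0; 1, 0; 0, 1; v 0, v 1]
def Q₃ (v : Fin 2 → K) : Matrix (Fin 2) (Fin 4) K := !![1, 0, 0, 0; 0, -v 0, -v 1, 1]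

theorem Q₁_mul_P₁ (v : Fin 4 → K) : Q₁ v * P₁ v = 0 := by
  ext i j; fin_cases i <;> fin_cases j <;> simp [P₁, Q₁, mul_apply, Fin.sum_univ_four]
theorem Q₂_mul_P₂ (v : Fin 3 → K) : Q₂ v * P₂ v = 0 := by
  ext i j; fin_cases i <;> fin_cases j <;> simp [P₂, Q₂, mul_apply, Fin.sum_univ_four]
theorem Q₃_mul_P₃ (v : Fin 2 → K) : Q₃ v * P₃ v = 0 := by
  ext i j; fin_cases i <;> fin_cases j <;> simp [P₃, Q₃, mul_apply, Fin.sum_univ_four]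

theorem P₁_submatrix_eq_one (v : Fin 4 → K) : (P₁ v).submatrix ![0, 1] id = 1 := by
  ext i j; fin_cases i <;> fin_cases j <;> simp [P₁]
theorem Q₁_submatrix_eq_one (v : Fin 4 → K) : (Q₁ v).submatrix id ![2, 3] = 1 := by
  ext i j; fin_cases i <;> fin_cases j <;> simp [Q₁]
theorem P₂_submatrix_eq_one (v : Fin 3 → K) : (P₂ v).submatrix ![0, 2] id = 1 := by
  ext i j; fin_cases i <;> fin_cases j <;> simp [P₂]
theorem Q₂_submatrix_eq_one (v : Fin 3 → K) : (Q₂ v).submatrix id ![1, 3] = 1 := by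
  ext i j; fin_cases i <;> fin_cases j <;> simp [Q₂]
theorem P₃_submatrix_eq_one (v : Fin 2 → K) : (P₃ v).submatrix ![1, 2] id = 1 := by
  ext i j; fin_cases i <;> fin_cases j <;> simp [P₃]
theorem Q₃_submatrix_eq_one (v : Fin 2 → K) : (Q₃ v).submatrix id ![0, 3] = 1 := by
  ext i j; fin_cases i <;> fin_cases j <;> simp [Q₃]

theorem P₁_injective : Injective (P₁ : (Fin 4 → K) → _) := fun v w h => by
  ext i; fin_cases i
  exacts [congrFun₂ h 2 0, congrFun₂ h 2 1, congrFun₂ h 3 0, congrFun₂ h 3 1]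
theorem P₂_injective : Injective (P₂ : (Fin 3 → K) → _) := fun v w h => by
  ext i; fin_cases i
  exacts [congrFun₂ h 1 0, congrFun₂ h 3 0, congrFun₂ h 3 1]
theorem P₃_injective : Injective (P₃ : (Fin 2 → K) → _) := fun v w h => by
  ext i; fin_cases i
  exacts [congrFun₂ h 3 0, congrFun₂ h 3 1]

def rankOne₁ (x : (Fin 3 → K) × {w : Fin 3 → K // w ≠ 0}) : Matrix (Fin 4) (Fin 4) K :=
  vecMulVec (vecCons 1 x.1) (vecCons (-(x.1 ⬝ᵥ x.2)) x.2)

def rankOne₂ (w : {w : Fin 3 → K // w ≠ 0}) : Matrix (Fin 4) (Fin 4) K :=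
  vecMulVec ![0, 1, 0, 0] ![w.1 0, 0, w.1 1, w.1 2]

theorem rankOne₁_mul_self (x : (Fin 3 → K) × {w : Fin 3 → K // w ≠ 0}) :
    rankOne₁ x * rankOne₁ x = 0 :=
  vecMulVec_mul_self_eq_zero <| by simp [dotProduct_comm]

theorem rankOne₂_mul_self (w : {w : Fin 3 → K // w ≠ 0}) : rankOne₂ w * rankOne₂ w = 0 :=
  vecMulVec_mul_self_eq_zero <| by simp

theorem rankOne₁_row_zero (x : (Fin 3 → K) × {w : Fin 3 → K // w ≠ 0}) :
    rankOne₁ x 0 = vecCons (-(x.1 ⬝ᵥ x.2)) x.2 :=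
  funext fun j => by simp only [rankOne₁, vecMulVec_apply, cons_val_zero, one_mul]

theorem rankOne₂_row_zero (w : {w : Fin 3 → K // w ≠ 0}) : rankOne₂ w 0 = 0 :=
  funext fun j => by simp [rankOne₂, vecMulVec_apply]

theorem rankOne₁_row_zero_ne_zero (x : (Fin 3 → K) × {w : Fin 3 → K // w ≠ 0}) :
    rankOne₁ x 0 ≠ 0 := by
  rw [rankOne₁_row_zero]
  exact fun h => x.2.2 (cons_eq_zero_iff.mp h).2

theorem rankOne₁_ne_zero (x : (Fin 3 → K) × {w : Fin 3 → K // w ≠ 0}) :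
    rankOne₁ x ≠ 0 :=
  fun h => rankOne₁_row_zero_ne_zero x (by rw [h]; rfl)

theorem rankOne₂_ne_zero (w : {w : Fin 3 → K // w ≠ 0}) : rankOne₂ w ≠ 0 := by
  refine vecMulVec_ne_zero (by simp) fun h => w.2 ?_
  ext i; fin_cases i
  exacts [congrFun h 0, congrFun h 2, congrFun h 3]

theorem rankOne₁_injective : Injective (rankOne₁ : _ → Matrix (Fin 4) (Fin 4) K) := by
  rintro ⟨x, w, hw⟩ ⟨x', w', hw'⟩ h
  have hv := congrFun h 0
  simp only [rankOne₁_row_zero, vecCons_inj] at hv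
  obtain rfl : w = w' := hv.2
  simp only [rankOne₁, hv.1] at h
  have hv₀ : vecCons (-(x' ⬝ᵥ w)) w ≠ 0 := fun h₀ => hw (cons_eq_zero_iff.mp h₀).2
  obtain rfl : x = x' := (vecCons_inj.mp (eq_of_vecMulVec_eq hv₀ h)).2
  rfl

theorem rankOne₂_injective : Injective (rankOne₂ : _ → Matrix (Fin 4) (Fin 4) K) := by
  rintro ⟨w, hw⟩ ⟨w', hw'⟩ h
  congr
  ext i; fin_cases i
  exacts [by simpa [rankOne₂] using congrFun₂ h 1 0, by simpa [rankOne₂] using congrFun₂ h 1 2,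
    by simpa [rankOne₂] using congrFun₂ h 1 3]

def cell₁ (x : GL (Fin 2) K × (Fin 4 → K)) : Matrix (Fin 4) (Fin 4) K :=
  P₁ x.2 * (x.1 : Matrix (Fin 2) (Fin 2) K) * Q₁ x.2
def cell₂ (x : GL (Fin 2) K × (Fin 3 → K)) : Matrix (Fin 4) (Fin 4) K :=
  P₂ x.2 * (x.1 : Matrix (Fin 2) (Fin 2) K) * Q₂ x.2
def cell₃ (x : GL (Fin 2) K × (Fin 2 → K)) : Matrix (Fin 4) (Fin 4) K :=
  P₃ x.2 * (x.1 : Matrix (Fin 2) (Fin 2) K) * Q₃ x.2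

theorem cell₁_injective : Injective (cell₁ (K := K)) :=
  injective_mul_mul_of_submatrix_eq_one P₁_injective P₁_submatrix_eq_one Q₁_submatrix_eq_one
theorem cell₂_injective : Injective (cell₂ (K := K)) :=
  injective_mul_mul_of_submatrix_eq_one P₂_injective P₂_submatrix_eq_one Q₂_submatrix_eq_one
theorem cell₃_injective : Injective (cell₃ (K := K)) :=
  injective_mul_mul_of_submatrix_eq_one P₃_injective P₃_submatrix_eq_one Q₃_submatrix_eq_one

theorem isUnit_det_cell₁_submatrix (x : GL (Fin 2) K × (Fin 4 → K)) :
    IsUnit ((cell₁ x).submatrix ![0, 1] ![2, 3]).det := by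
  rw [cell₁, submatrix_mul_mul_of_submatrix_eq_one (P₁_submatrix_eq_one _)
    (Q₁_submatrix_eq_one _)]
  exact isUnits_det_units x.1

theorem isUnit_det_cell₂_submatrix (x : GL (Fin 2) K × (Fin 3 → K)) :
    IsUnit ((cell₂ x).submatrix ![0, 2] ![1, 3]).det := by
  rw [cell₂, submatrix_mul_mul_of_submatrix_eq_one (P₂_submatrix_eq_one _)
    (Q₂_submatrix_eq_one _)]
  exact isUnits_det_units x.1

theorem isUnit_det_cell₃_submatrix (x : GL (Fin 2) K × (Fin 2 → K)) :
    IsUnit ((cell₃ x).submatrix ![1, 2] ![0, 3]).det := by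
  rw [cell₃, submatrix_mul_mul_of_submatrix_eq_one (P₃_submatrix_eq_one _)
    (Q₃_submatrix_eq_one _)]
  exact isUnits_det_units x.1

theorem det_cell₂_submatrix_zero_one (x : GL (Fin 2) K × (Fin 3 → K)) :
    ((cell₂ x).submatrix ![0, 1] ![2, 3]).det = 0 :=
  det_submatrix_mul_mul_eq_zero _ _ <| by rw [det_fin_two]; simp [P₂]

theorem det_cell₃_submatrix_zero_one (x : GL (Fin 2) K × (Fin 2 → K)) :
    ((cell₃ x).submatrix ![0, 1] ![2, 3]).det = 0 :=
  det_submatrix_mul_mul_eq_zero _ _ <| by rw [det_fin_two]; simp [P₃]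

theorem det_cell₃_submatrix_zero_two (x : GL (Fin 2) K × (Fin 2 → K)) :
    ((cell₃ x).submatrix ![0, 2] ![1, 3]).det = 0 :=
  det_submatrix_mul_mul_eq_zero _ _ <| by rw [det_fin_two]; simp [P₃]

abbrev Params (K : Type*) [Field K] : Type _ :=
  (GL (Fin 2) K × (Fin 4 → K)) ⊕ (GL (Fin 2) K × (Fin 3 → K)) ⊕
    (GL (Fin 2) K × (Fin 2 → K)) ⊕ ((Fin 3 → K) × {w : Fin 3 → K // w ≠ 0}) ⊕
      {w : Fin 3 → K // w ≠ 0}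

def param : Params K → Matrix (Fin 4) (Fin 4) K :=
  Sum.elim cell₁ <| Sum.elim cell₂ <| Sum.elim cell₃ <| Sum.elim rankOne₁ rankOne₂

theorem param_mul_self (x : Params K) : param x * param x = 0 := by
  rcases x with x | x | x | x | x
  · exact mul_mul_mul_self_eq_zero _ (Q₁_mul_P₁ _)
  · exact mul_mul_mul_self_eq_zero _ (Q₂_mul_P₂ _)
  · exact mul_mul_mul_self_eq_zero _ (Q₃_mul_P₃ _)
  · exact rankOne₁_mul_self x
  · exact rankOne₂_mul_self x

theorem param_ne_zero (x : Params K) : param x ≠ 0 := by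
  rcases x with x | x | x | x | x
  · exact ne_zero_of_isUnit_det_submatrix (isUnit_det_cell₁_submatrix x)
  · exact ne_zero_of_isUnit_det_submatrix (isUnit_det_cell₂_submatrix x)
  · exact ne_zero_of_isUnit_det_submatrix (isUnit_det_cell₃_submatrix x)
  · exact rankOne₁_ne_zero x
  · exact rankOne₂_ne_zero x

-- Each cell is recognised by an invertible minor that vanishes on all later families.
theorem param_injective : Injective (param (K := K)) := by
  refine cell₁_injective.sumElim_of_separating
    (fun N => IsUnit (N.submatrix ![0, 1] ![2, 3]).det) ?_ isUnit_det_cell₁_submatrix ?_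
  · refine cell₂_injective.sumElim_of_separating
      (fun N => IsUnit (N.submatrix ![0, 2] ![1, 3]).det) ?_ isUnit_det_cell₂_submatrix ?_
    · refine cell₃_injective.sumElim_of_separating
        (fun N => IsUnit (N.submatrix ![1, 2] ![0, 3]).det) ?_ isUnit_det_cell₃_submatrix ?_
      · exact rankOne₁_injective.sumElim_of_separating (fun N => N 0 ≠ 0) rankOne₂_injective
          rankOne₁_row_zero_ne_zero fun w h => h (rankOne₂_row_zero w)
      · rintro (x | x) <;> simp only [Sum.elim_inl, Sum.elim_inr, rankOne₁, rankOne₂,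
          det_submatrix_vecMulVec, not_isUnit_zero, not_false_eq_true]
    · rintro (x | x | x) <;> simp only [Sum.elim_inl, Sum.elim_inr,
        det_cell₃_submatrix_zero_two, rankOne₁, rankOne₂, det_submatrix_vecMulVec,
        not_isUnit_zero, not_false_eq_true]
  · rintro (x | x | x | x) <;> simp only [Sum.elim_inl, Sum.elim_inr,
      det_cell₂_submatrix_zero_one, det_cell₃_submatrix_zero_one, rankOne₁, rankOne₂,
      det_submatrix_vecMulVec, not_isUnit_zero, not_false_eq_true]

theorem card_params [Fintype K] :
    Nat.card (Params K) = (Fintype.card K ^ 3 - 1) * (Fintype.card K ^ 5 + 1) := by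
  classical
  have hw : Nat.card {w : Fin 3 → K // w ≠ 0} = Fintype.card K ^ 3 - 1 := by
    rw [Nat.card_eq_fintype_card, Fintype.card_subtype_compl, Fintype.card_subtype_eq]; simp
  simp only [Nat.card_sum, Nat.card_prod, Nat.card_fun, card_GL_field, Fin.prod_univ_two, hw,
    Nat.card_eq_fintype_card (α := K), Nat.card_fin, Fin.val_zero, Fin.val_one, pow_zero,
    pow_one]
  have hq : 1 ≤ Fintype.card K := Fintype.card_pos
  generalize Fintype.card K = q at hq ⊢
  have h2 : 1 ≤ q ^ 2 := Nat.one_le_pow _ _ hq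
  have h3 : 1 ≤ q ^ 3 := Nat.one_le_pow _ _ hq
  have h2' : q ≤ q ^ 2 := Nat.le_self_pow two_ne_zero q
  zify [h2, h3, h2']
  ring

theorem card_params_le_card [Fintype K] :
    Nat.card (Params K) ≤ Nat.card {N : Matrix (Fin 4) (Fin 4) K // N * N = 0 ∧ N ≠ 0} :=
  Nat.card_le_card_of_injective (fun x => ⟨param x, param_mul_self x, param_ne_zero x⟩)
    fun _ _ h => param_injective (congrArg Subtype.val h)

end SquareZero

theorem sl4_involution_count_general (f : ℕ) (q : ℕ) (hq : q = 2 ^ f)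
    (K : Type) [Field K] [Fintype K] (hK : Fintype.card K = q) :
    q ^ 5 * (q ^ 3 - 1) <
      Nat.card {A : Matrix.SpecialLinearGroup (Fin 4) K // orderOf A = 2} := by
  have h2f : (2 : K) ^ f = 0 := by
    exact_mod_cast hq ▸ hK ▸ FiniteField.cast_card_eq_zero K
  have : CharP K 2 :=
    CharTwo.of_one_ne_zero_of_two_eq_zero one_ne_zero (eq_zero_of_pow_eq_zero h2f)
  have hq₃ : 1 < q ^ 3 := Nat.one_lt_pow three_ne_zero (hK ▸ Fintype.one_lt_card)
  calc q ^ 5 * (q ^ 3 - 1) < (q ^ 3 - 1) * (q ^ 5 + 1) := by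
        rw [mul_add_one, mul_comm]; omega
    _ = Nat.card (SquareZero.Params K) := by rw [SquareZero.card_params, hK]
    _ ≤ _ := SquareZero.card_params_le_card
    _ ≤ _ := Matrix.SpecialLinearGroup.card_mul_self_eq_zero_le_card_orderOf_eq_two

theorem sl4_involution_count (f : ℕ) (hf : 1 ≤ f) (q : ℕ) (hq : q = 2 ^ f)
    (K : Type) [Field K] [Fintype K] (hK : Fintype.card K = q) :
    q ^ 5 * (q ^ 3 - 1) <
      Nat.card {A : Matrix.SpecialLinearGroup (Fin 4) K // orderOf A = 2} :=
  sl4_involution_count_general f q hq K hK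
end

section
/- Let f ≥ 1 be an integer, q = 2^f, let K be a finite field with |K| = q, and let n ∈ {6, 8}. Then 2 times the number of involutions of the special linear group SLₙ(K) is strictly greater than q^{n²/2}. -/
/-!
In characteristic two, `A ↦ A - 1` is a bijection from the involutions of `SLₙ(K)` onto the nonzero
matrices `N` with `N² = 0`. For `C : K^{l×k}` and `X : K^{k×l}` of rank `k`, the matrix
`[1; C] X [-C, 1]` squares to zero, has rank `k` and determines `(C, X)`. The two families
`(k, l) = (n/2, n/2)` and `(n/2 - 1, n/2 + 1)` are disjoint, and together they already contain
more than `q^{n²/2} / 2` matrices.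
-/

open Matrix

namespace Matrix

section GraphSquareZero

variable {m l R : Type*} [Fintype m] [Fintype l] [DecidableEq m] [DecidableEq l]

/-- The image of `[1; C] * X * [-C, 1]` lies in the graph of `C`, which its last factor kills. -/
def graphSquareZero [Ring R] (C : Matrix l m R) (X : Matrix m l R) : Matrix (m ⊕ l) (m ⊕ l) R :=
  fromRows 1 C * (X * fromCols (-C) 1)

section Ring

variable [Ring R] (C : Matrix l m R) (X : Matrix m l R)

theorem graphSquareZero_mul_self : graphSquareZero C X * graphSquareZero C X = 0 := by
  have hkill : fromCols (-C) (1 : Matrix l l R) * fromRows (1 : Matrix m m R) C = 0 := by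
    rw [fromCols_mul_fromRows, Matrix.mul_one, Matrix.one_mul, neg_add_cancel]
  simp only [graphSquareZero, Matrix.mul_assoc]
  rw [← Matrix.mul_assoc (fromCols _ _), hkill, Matrix.zero_mul, Matrix.mul_zero, Matrix.mul_zero]

@[simp]
theorem toBlocks₁₂_graphSquareZero : (graphSquareZero C X).toBlocks₁₂ = X := by
  simp [graphSquareZero, mul_fromCols]

@[simp]
theorem toBlocks₂₂_graphSquareZero : (graphSquareZero C X).toBlocks₂₂ = C * X := by
  simp [graphSquareZero, mul_fromCols]

end Ring

variable {K : Type*} [Field K]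

theorem rank_graphSquareZero (C : Matrix l m K) {X : Matrix m l K}
    (hX : LinearIndependent K X.row) : (graphSquareZero C X).rank = Fintype.card m := by
  refine le_antisymm ((rank_mul_le_left _ _).trans (rank_le_card_width _)) ?_
  calc Fintype.card m = X.rank := hX.rank_matrix.symm
    _ = ((graphSquareZero C X).submatrix Sum.inl Sum.inr).rank := by
      conv_lhs => rw [← toBlocks₁₂_graphSquareZero C X]
      rfl
    _ ≤ (graphSquareZero C X).rank := rank_submatrix_le _ _ _

theorem graphSquareZero_inj {C₁ C₂ : Matrix l m K} {X₁ X₂ : Matrix m l K}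
    (hX₁ : LinearIndependent K X₁.row) (h : graphSquareZero C₁ X₁ = graphSquareZero C₂ X₂) :
    C₁ = C₂ ∧ X₁ = X₂ := by
  have hX : X₁ = X₂ := by simpa using congrArg toBlocks₁₂ h
  have hCX : C₁ * X₁ = C₂ * X₁ := by simpa [hX] using congrArg toBlocks₂₂ h
  refine ⟨funext fun i => vecMul_injective_iff.mpr hX₁ ?_, hX⟩
  simpa only [mul_apply_eq_vecMul] using congrFun hCX i

end GraphSquareZero

section Count

variable {K : Type*} [Field K] [Fintype K]

theorem card_prod_le_card_mul_self_eq_zero_rank {k l n : ℕ} (hn : k + l = n) :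
    Nat.card (Matrix (Fin l) (Fin k) K × {X : Matrix (Fin k) (Fin l) K // LinearIndependent K X.row})
      ≤ Nat.card {N : Matrix (Fin n) (Fin n) K // N * N = 0 ∧ N.rank = k} := by
  let e := reindexAlgEquiv K K (finSumFinEquiv.trans (finCongr hn))
  refine Nat.card_le_card_of_injective
    (fun CX => ⟨e (graphSquareZero CX.1 CX.2.1), ?_, ?_⟩) ?_
  · rw [← map_mul, graphSquareZero_mul_self, map_zero]
  · rw [coe_reindexAlgEquiv, rank_reindex, rank_graphSquareZero _ CX.2.2, Fintype.card_fin]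
  · rintro ⟨C₁, X₁, hX₁⟩ ⟨C₂, X₂, hX₂⟩ h
    obtain ⟨rfl, rfl⟩ := graphSquareZero_inj hX₁ (e.injective (congrArg Subtype.val h))
    rfl

theorem card_linearIndependent_row {k l : ℕ} (hkl : k ≤ l) :
    Nat.card {X : Matrix (Fin k) (Fin l) K // LinearIndependent K X.row}
      = ∏ i : Fin k, (Fintype.card K ^ l - Fintype.card K ^ (i : ℕ)) := by
  have hl : Module.finrank K (Fin l → K) = l := by simp
  have hcard := card_linearIndependent (K := K) (V := Fin l → K) (k := k) (hl.ge.trans' hkl)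
  rw [hl] at hcard
  exact hcard

theorem pow_mul_prod_le_card_mul_self_eq_zero_rank {k l n : ℕ} (hkl : k ≤ l) (hn : k + l = n) :
    Fintype.card K ^ (l * k) * ∏ i : Fin k, (Fintype.card K ^ l - Fintype.card K ^ (i : ℕ))
      ≤ Nat.card {N : Matrix (Fin n) (Fin n) K // N * N = 0 ∧ N.rank = k} := by
  refine le_of_eq_of_le ?_ (card_prod_le_card_mul_self_eq_zero_rank hn)
  rw [Nat.card_prod, card_linearIndependent_row hkl, Nat.card_congr Matrix.of.symm, Nat.card_fun,
    Nat.card_fun, Nat.card_eq_fintype_card, Nat.card_fin, Nat.card_fin, ← pow_mul, mul_comm k]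

theorem card_mul_self_eq_zero_rank_add_le {ι : Type*} [Fintype ι] [DecidableEq ι] {a b : ℕ}
    (ha : a ≠ 0) (hb : b ≠ 0) (hab : a ≠ b) :
    Nat.card {N : Matrix ι ι K // N * N = 0 ∧ N.rank = a}
      + Nat.card {N : Matrix ι ι K // N * N = 0 ∧ N.rank = b}
      ≤ Nat.card {N : Matrix ι ι K // N * N = 0 ∧ N ≠ 0} := by
  rw [← Nat.card_sum]
  refine Nat.card_le_card_of_injective
    (Sum.elim (fun N => ⟨N, N.2.1, ?_⟩) (fun N => ⟨N, N.2.1, ?_⟩)) ?_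
  · exact fun h0 => ha (by rw [← N.2.2, h0, rank_zero])
  · exact fun h0 => hb (by rw [← N.2.2, h0, rank_zero])
  rintro (N₁ | N₁) (N₂ | N₂) h <;> simp only [Sum.elim_inl, Sum.elim_inr, Subtype.mk.injEq] at h
  · exact congrArg Sum.inl (Subtype.ext h)
  · exact absurd (N₁.2.2.symm.trans (h ▸ N₂.2.2)) hab
  · exact absurd (N₂.2.2.symm.trans (h ▸ N₁.2.2)) hab
  · exact congrArg Sum.inr (Subtype.ext h)

end Count

section Involution

theorem sub_one_mul_self_of_two_eq_zero {R : Type*} [Ring R] (h2 : (2 : R) = 0) (x : R) :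
    (x - 1) * (x - 1) = x * x - 1 := by
  have hexpand : (x - 1) * (x - 1) = x * x - 1 + 2 * (1 - x) := by noncomm_ring
  rw [hexpand, h2, zero_mul, add_zero]

variable {n R : Type*} [Fintype n] [DecidableEq n] [CommRing R]

theorem SpecialLinearGroup.orderOf_eq_two_iff (A : SpecialLinearGroup n R) :
    orderOf A = 2 ↔ (A : Matrix n n R) * A = 1 ∧ (A : Matrix n n R) ≠ 1 := by
  have : Fact (Nat.Prime 2) := ⟨Nat.prime_two⟩
  rw [orderOf_eq_prime_iff, sq]
  exact and_congr Subtype.ext_iff (not_congr Subtype.ext_iff)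

variable [NoZeroDivisors R] [CharP R 2]

theorem det_eq_one_of_mul_self_eq_one {M : Matrix n n R} (h : M * M = 1) : M.det = 1 :=
  CharTwo.sq_inj.mp (by rw [sq, ← det_mul, h, det_one, one_pow])

def SpecialLinearGroup.involutionEquivSquareZero :
    {A : SpecialLinearGroup n R // orderOf A = 2} ≃ {N : Matrix n n R // N * N = 0 ∧ N ≠ 0} :=
  have h2 : (2 : Matrix n n R) = 0 := by
    rw [← map_ofNat (algebraMap R (Matrix n n R)) 2, CharTwo.two_eq_zero, map_zero]
  ((Equiv.subtypeEquivRight SpecialLinearGroup.orderOf_eq_two_iff).trans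
    (Equiv.subtypeSubtypeEquivSubtype (p := fun M : Matrix n n R => M.det = 1)
      (q := fun M => M * M = 1 ∧ M ≠ 1) fun h => det_eq_one_of_mul_self_eq_one h.1)).trans
    ((Equiv.subRight 1).subtypeEquiv fun M => by
      rw [Equiv.subRight_apply, sub_one_mul_self_of_two_eq_zero h2, sub_eq_zero, sub_ne_zero])

end Involution

end Matrix

theorem FiniteField.charP_two_of_card_eq_two_pow {K : Type*} [Field K] [Fintype K] {f : ℕ}
    (h : Fintype.card K = 2 ^ f) : CharP K 2 := by
  have hcard := FiniteField.cast_card_eq_zero K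
  rw [h, Nat.cast_pow, Nat.cast_ofNat] at hcard
  exact CharTwo.of_one_ne_zero_of_two_eq_zero one_ne_zero (eq_zero_of_pow_eq_zero hcard)

theorem prod_natCast_pow_sub_pow {q k l : ℕ} (hq : 1 ≤ q) (hkl : k ≤ l) :
    ∏ i : Fin k, ((q ^ l - q ^ (i : ℕ) : ℕ) : ℤ) = ∏ i : Fin k, ((q : ℤ) ^ l - (q : ℤ) ^ (i : ℕ)) :=
  Finset.prod_congr rfl fun i _ => by
    rw [Nat.cast_sub (Nat.pow_le_pow_right hq (i.is_lt.le.trans hkl)), Nat.cast_pow, Nat.cast_pow]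

/-- After substituting `q = y + 2`, the difference of the two sides is a polynomial in `y` with
nonnegative coefficients. -/
theorem pow_eighteen_lt {q : ℕ} (hq : 2 ≤ q) :
    q ^ 18 < 2 * (q ^ (3 * 3) * ∏ i : Fin 3, (q ^ 3 - q ^ (i : ℕ))
      + q ^ (4 * 2) * ∏ i : Fin 2, (q ^ 4 - q ^ (i : ℕ))) := by
  zify
  rw [prod_natCast_pow_sub_pow (by omega) le_rfl, prod_natCast_pow_sub_pow (by omega) (by norm_num)]
  obtain ⟨y, rfl⟩ := Nat.exists_eq_add_of_le' hq
  simp only [Fin.prod_univ_succ, Fin.prod_univ_zero, Fin.val_zero, Fin.val_succ]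
  rw [← sub_pos]
  push_cast
  ring_nf
  positivity

theorem pow_thirtyTwo_lt {q : ℕ} (hq : 2 ≤ q) :
    q ^ 32 < 2 * (q ^ (4 * 4) * ∏ i : Fin 4, (q ^ 4 - q ^ (i : ℕ))
      + q ^ (5 * 3) * ∏ i : Fin 3, (q ^ 5 - q ^ (i : ℕ))) := by
  zify
  rw [prod_natCast_pow_sub_pow (by omega) le_rfl, prod_natCast_pow_sub_pow (by omega) (by norm_num)]
  obtain ⟨y, rfl⟩ := Nat.exists_eq_add_of_le' hq
  simp only [Fin.prod_univ_succ, Fin.prod_univ_zero, Fin.val_zero, Fin.val_succ]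
  rw [← sub_pos]
  push_cast
  ring_nf
  positivity

theorem sl68_involution_count_general (f : ℕ) (q : ℕ) (hq : q = 2 ^ f)
    (K : Type) [Field K] [Fintype K] (hK : Fintype.card K = q)
    (n : ℕ) (hn : n = 6 ∨ n = 8) :
    q ^ (n ^ 2 / 2) <
      2 * Nat.card {A : Matrix.SpecialLinearGroup (Fin n) K // orderOf A = 2} := by
  have : CharP K 2 := FiniteField.charP_two_of_card_eq_two_pow (hK.trans hq)
  have hq2 : 2 ≤ q := hK ▸ Fintype.one_lt_card
  rw [Nat.card_congr SpecialLinearGroup.involutionEquivSquareZero]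
  subst hK
  rcases hn with rfl | rfl
  · refine (pow_eighteen_lt hq2).trans_le (Nat.mul_le_mul_left 2 ?_)
    exact (add_le_add (pow_mul_prod_le_card_mul_self_eq_zero_rank le_rfl rfl)
      (pow_mul_prod_le_card_mul_self_eq_zero_rank (by norm_num) rfl)).trans
      (card_mul_self_eq_zero_rank_add_le (by norm_num) (by norm_num) (by norm_num))
  · refine (pow_thirtyTwo_lt hq2).trans_le (Nat.mul_le_mul_left 2 ?_)
    exact (add_le_add (pow_mul_prod_le_card_mul_self_eq_zero_rank le_rfl rfl)
      (pow_mul_prod_le_card_mul_self_eq_zero_rank (by norm_num) rfl)).trans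
      (card_mul_self_eq_zero_rank_add_le (by norm_num) (by norm_num) (by norm_num))

theorem sl68_involution_count (f : ℕ) (hf : 1 ≤ f) (q : ℕ) (hq : q = 2 ^ f)
    (K : Type) [Field K] [Fintype K] (hK : Fintype.card K = q)
    (n : ℕ) (hn : n = 6 ∨ n = 8) :
    q ^ (n ^ 2 / 2) <
      2 * Nat.card {A : Matrix.SpecialLinearGroup (Fin n) K // orderOf A = 2} :=
  sl68_involution_count_general f q hq K hK n hn
end
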